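/- Let H₀ and V be Hermitian matrices on a finite-dimensional complex Hilbert space, let H = H₀ + V, let a ≤ b be reals and ε > 0. Let G_i = P_H([a+ε, b−ε]) be the spectral projection of H onto the interval [a+ε, b−ε], and let F̄ = P_{H₀}(ℝ ∖ [a, b]) be the spectral projection of H₀ onto the complement of [a, b]. Then ‖G_i F̄‖∞ ≤ ‖V‖∞ / ε. -/

import Mathlib

open scoped ComplexOrder

noncomputable section

/-- The positive semidefinite square root of a positive semidefinite matrix
(removed from Mathlib; restored with its former definition). -/
def Matrix.PosSemidef.sqrt {n : Type*} {𝕜 : Type*} [Fintype n] [RCLike 𝕜] [DecidableEq n]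
    {A : Matrix n n 𝕜} (hA : A.PosSemidef) : Matrix n n 𝕜 :=
  hA.1.eigenvectorUnitary.1 * Matrix.diagonal ((↑) ∘ (Real.sqrt ∘ hA.1.eigenvalues)) *
    (star hA.1.eigenvectorUnitary : Matrix n n 𝕜)

/-- The trace norm of a complex square matrix: the sum of its singular values,
equal to the trace of `√(Xᴴ X)`. -/
def traceNorm {n : Type*} [Fintype n] [DecidableEq n] (X : Matrix n n ℂ) : ℝ :=
  ((Matrix.posSemidef_conjTranspose_mul_self X).sqrt.trace).re

/-- The operator norm (largest singular value) of a complex square matrix. -/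
def opNorm {n : Type*} [Fintype n] [DecidableEq n] (X : Matrix n n ℂ) : ℝ :=
  ‖Matrix.toEuclideanCLM (𝕜 := ℂ) X‖

/-- The spectral projection of a Hermitian matrix `A` onto the set `S ⊆ ℝ`:
the orthogonal projection onto the span of the eigenvectors of `A` with
eigenvalues in `S`. -/
def spectralProj {n : Type*} [Fintype n] [DecidableEq n] {A : Matrix n n ℂ}
    (hA : A.IsHermitian) (S : Set ℝ) : Matrix n n ℂ :=
  (hA.eigenvectorUnitary : Matrix n n ℂ) *
    Matrix.diagonal (fun i => S.indicator (fun _ => (1 : ℂ)) (hA.eigenvalues i)) *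
    (star (hA.eigenvectorUnitary : Matrix n n ℂ))

/-- The number of eigenvalues (counted with multiplicity) of a Hermitian matrix
lying in the set `S ⊆ ℝ`. -/
def eigCount {n : Type*} [Fintype n] [DecidableEq n] {A : Matrix n n ℂ}
    (hA : A.IsHermitian) (S : Set ℝ) : ℕ :=
  Nat.card {i // hA.eigenvalues i ∈ S}

/-! Let `c` be the midpoint and `r` the half-length of `[a, b]`, `G = P_H([a+ε, b-ε])`,
`F = P_{H₀}(ℝ ∖ [a, b])` and `X = G F`. As spectral projections commute with their operators,
`G (H - c) X - X (H₀ - c) = G V F`. On the range of `G` we have `‖H - c‖ ≤ r - ε`, while on the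
range of `F` the operator `H₀ - c` has an inverse of norm at most `1 / r`. Hence
`r ‖X‖ ≤ ‖X (H₀ - c)‖ ≤ (r - ε) ‖X‖ + ‖V‖`. -/

lemma mul_norm_le_norm_mul_sub_mul {R : Type*} [NonUnitalSeminormedRing R] {A B K X : R}
    {r ε : ℝ} (hr : 0 < r) (hA : ‖A‖ ≤ r - ε) (hK : ‖K‖ ≤ r⁻¹) (hX : X * B * K = X) :
    ε * ‖X‖ ≤ ‖A * X - X * B‖ := by
  have hXB : r * ‖X‖ ≤ ‖X * B‖ :=
    calc r * ‖X‖ = r * ‖X * B * K‖ := by rw [hX]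
      _ ≤ r * (‖X * B‖ * r⁻¹) := by gcongr; exact norm_mul_le_of_le le_rfl hK
      _ = ‖X * B‖ := by field_simp
  have hAX : ‖A * X‖ ≤ (r - ε) * ‖X‖ := norm_mul_le_of_le hA le_rfl
  have hsub := norm_sub_norm_le (X * B) (A * X)
  rw [norm_sub_rev] at hsub
  linarith

lemma IsIdempotentElem.mul_mul_mul_sub_mul_mul {R : Type*} [Ring R] {G F H H₀ : R}
    (hG : IsIdempotentElem G) (hGH : Commute G H) (hFH₀ : Commute F H₀) :
    G * H * (G * F) - G * F * H₀ = G * (H - H₀) * F :=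
  calc G * H * (G * F) - G * F * H₀ = (G * G) * H * F - G * (F * H₀) := by
        rw [mul_assoc G H, ← mul_assoc H, ← hGH.eq]; simp only [mul_assoc]
    _ = G * (H - H₀) * F := by rw [hG.eq, hFH₀.eq, mul_sub, sub_mul, mul_assoc G H₀]

namespace Matrix.IsHermitian

variable {n : Type*} [Fintype n] [DecidableEq n] {A : Matrix n n ℂ}

lemma continuousOn_spectrum (hA : A.IsHermitian) (f : ℝ → ℝ) :
    ContinuousOn f (spectrum ℝ A) :=
  (hA.spectrum_real_eq_range_eigenvalues ▸ Set.finite_range _).continuousOn f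

lemma spectralProj_eq_cfc (hA : A.IsHermitian) (S : Set ℝ) :
    spectralProj hA S = cfc (S.indicator 1) A := by
  rw [hA.cfc_eq, IsHermitian.cfc, Unitary.conjStarAlgAut_apply, spectralProj]
  congr 3
  ext i
  by_cases hi : hA.eigenvalues i ∈ S <;> simp [hi]

lemma sub_algebraMap_eq_cfc (hA : A.IsHermitian) (c : ℝ) :
    A - algebraMap ℝ _ c = cfc (fun x => x - c) A := by
  rw [cfc_sub _ _ _ (hA.continuousOn_spectrum _) (hA.continuousOn_spectrum _),
    cfc_id' ℝ A hA.isSelfAdjoint, cfc_const c A hA.isSelfAdjoint]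

lemma isIdempotentElem_spectralProj (hA : A.IsHermitian) (S : Set ℝ) :
    IsIdempotentElem (spectralProj hA S) := by
  rw [IsIdempotentElem, spectralProj_eq_cfc,
    ← cfc_mul _ _ _ (hA.continuousOn_spectrum _) (hA.continuousOn_spectrum _)]
  congr 1
  ext x
  by_cases hx : x ∈ S <;> simp [hx]

lemma commute_spectralProj (hA : A.IsHermitian) (S : Set ℝ) :
    Commute (spectralProj hA S) A := by
  rw [spectralProj_eq_cfc]
  conv_rhs => rw [← cfc_id' ℝ A hA.isSelfAdjoint]
  exact cfc_commute_cfc _ _ _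

section L2OperatorNorm

open scoped Matrix.Norms.L2Operator

lemma norm_spectralProj_le_one (hA : A.IsHermitian) (S : Set ℝ) : ‖spectralProj hA S‖ ≤ 1 := by
  rw [spectralProj_eq_cfc]
  refine norm_cfc_le zero_le_one fun x _ => ?_
  by_cases hx : x ∈ S <;> simp [hx]

lemma norm_spectralProj_mul_sub_algebraMap_le (hA : A.IsHermitian) {S : Set ℝ} {c s : ℝ}
    (hs : 0 ≤ s) (hS : ∀ x ∈ S, |x - c| ≤ s) :
    ‖spectralProj hA S * (A - algebraMap ℝ _ c)‖ ≤ s := by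
  rw [spectralProj_eq_cfc, sub_algebraMap_eq_cfc hA,
    ← cfc_mul _ _ _ (hA.continuousOn_spectrum _) (hA.continuousOn_spectrum _)]
  refine norm_cfc_le hs fun x _ => ?_
  by_cases hx : x ∈ S
  · simpa [hx] using hS x hx
  · simpa [hx] using hs

lemma exists_sub_algebraMap_mul_eq_spectralProj (hA : A.IsHermitian) {S : Set ℝ} {c r : ℝ}
    (hr : 0 < r) (hS : ∀ x ∈ S, r ≤ |x - c|) :
    ∃ K, ‖K‖ ≤ r⁻¹ ∧ (A - algebraMap ℝ _ c) * K = spectralProj hA S := by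
  refine ⟨cfc (fun x => S.indicator 1 x * (x - c)⁻¹) A, ?_, ?_⟩
  · refine norm_cfc_le (inv_nonneg.mpr hr.le) fun x _ => ?_
    by_cases hx : x ∈ S
    · simpa [hx] using inv_anti₀ hr (hS x hx)
    · simp [hx, hr.le]
  · rw [sub_algebraMap_eq_cfc hA, spectralProj_eq_cfc,
      ← cfc_mul _ _ _ (hA.continuousOn_spectrum _) (hA.continuousOn_spectrum _)]
    congr 1
    ext x
    by_cases hx : x ∈ S
    · have hxc : x - c ≠ 0 := abs_pos.mp (hr.trans_le (hS x hx))
      simp [hx, hxc]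
    · simp [hx]

theorem mul_norm_spectralProj_mul_spectralProj_le {H H₀ : Matrix n n ℂ} (hH : H.IsHermitian)
    (hH₀ : H₀.IsHermitian) {S T : Set ℝ} {c r ε : ℝ} (hr : 0 < r) (hεr : ε ≤ r)
    (hS : ∀ x ∈ S, |x - c| ≤ r - ε) (hT : ∀ x ∈ T, r ≤ |x - c|) :
    ε * ‖spectralProj hH S * spectralProj hH₀ T‖ ≤ ‖H - H₀‖ := by
  obtain ⟨K, hK, hTK⟩ := hH₀.exists_sub_algebraMap_mul_eq_spectralProj hr hT
  have hSH : Commute (spectralProj hH S) (H - algebraMap ℝ _ c) :=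
    (hH.commute_spectralProj S).sub_right (Algebra.commute_algebraMap_right _ _)
  have hTH₀ : Commute (spectralProj hH₀ T) (H₀ - algebraMap ℝ _ c) :=
    (hH₀.commute_spectralProj T).sub_right (Algebra.commute_algebraMap_right _ _)
  calc ε * ‖spectralProj hH S * spectralProj hH₀ T‖
      ≤ ‖spectralProj hH S * (H - algebraMap ℝ _ c) * (spectralProj hH S * spectralProj hH₀ T) -
          spectralProj hH S * spectralProj hH₀ T * (H₀ - algebraMap ℝ _ c)‖ :=
        mul_norm_le_norm_mul_sub_mul hr
          (hH.norm_spectralProj_mul_sub_algebraMap_le (sub_nonneg.mpr hεr) hS) hK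
          (by rw [mul_assoc, mul_assoc, hTK, (hH₀.isIdempotentElem_spectralProj T).eq])
    _ = ‖spectralProj hH S * (H - H₀) * spectralProj hH₀ T‖ := by
        rw [(hH.isIdempotentElem_spectralProj S).mul_mul_mul_sub_mul_mul hSH hTH₀,
          sub_sub_sub_cancel_right]
    _ ≤ 1 * ‖H - H₀‖ * 1 :=
        norm_mul_le_of_le (norm_mul_le_of_le (hH.norm_spectralProj_le_one S) le_rfl)
          (hH₀.norm_spectralProj_le_one T)
    _ = ‖H - H₀‖ := by ring

end L2OperatorNorm

end Matrix.IsHermitian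

open scoped Matrix.Norms.L2Operator in
theorem spectralProj_inner_outer_opNorm_le_general {n : Type*} [Fintype n] [DecidableEq n]
    (H₀ V : Matrix n n ℂ) (hH₀ : H₀.IsHermitian) (hV : V.IsHermitian)
    (a b : ℝ) (ε : ℝ) (hε : 0 < ε)
    (Gi F' : Matrix n n ℂ)
    (hGi : Gi = spectralProj (hH₀.add hV) (Set.Icc (a + ε) (b - ε)))
    (hF' : F' = spectralProj hH₀ (Set.Icc a b)ᶜ) :
    opNorm (Gi * F') ≤ opNorm V / ε := by
  subst hGi hF'
  rw [opNorm, opNorm, le_div_iff₀' hε]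
  rcases lt_or_ge (b - ε) (a + ε) with hempty | hle
  · simp [Set.Icc_eq_empty_of_lt hempty, spectralProj]
  have hgap := (hH₀.add hV).mul_norm_spectralProj_mul_spectralProj_le hH₀
    (S := Set.Icc (a + ε) (b - ε)) (T := (Set.Icc a b)ᶜ) (c := (a + b) / 2)
    (r := (b - a) / 2) (ε := ε) (by linarith) (by linarith)
    (fun x hx => abs_le.mpr ⟨by linarith [hx.1], by linarith [hx.2]⟩)
    (fun x hx => by
      rcases not_and_or.mp hx with hx | hx
      · exact le_abs.mpr (.inr (by linarith [not_le.mp hx]))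
      · exact le_abs.mpr (.inl (by linarith [not_le.mp hx])))
  rwa [add_sub_cancel_left] at hgap

/-- the key spectral perturbation estimate
(Bhatia, Theorem VII.3.1): spectral projections of `H = H₀ + V` onto the
shrunken interval and of `H₀` onto the complement of the interval are
almost orthogonal. -/
theorem spectralProj_inner_outer_opNorm_le {n : Type*} [Fintype n] [DecidableEq n]
    (H₀ V : Matrix n n ℂ) (hH₀ : H₀.IsHermitian) (hV : V.IsHermitian)
    (a b : ℝ) (hab : a ≤ b) (ε : ℝ) (hε : 0 < ε)
    (Gi F' : Matrix n n ℂ)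
    (hGi : Gi = spectralProj (hH₀.add hV) (Set.Icc (a + ε) (b - ε)))
    (hF' : F' = spectralProj hH₀ (Set.Icc a b)ᶜ) :
    opNorm (Gi * F') ≤ opNorm V / ε :=
  spectralProj_inner_outer_opNorm_le_general H₀ V hH₀ hV a b ε hε Gi F' hGi hF'
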